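/- Simulation lemma: let P and P' be two transition kernels on S×𝒜, let ℓ, b : S×𝒜 → ℝ be bounded functions, and let π be any policy. Then (i) V_{P', ℓ−b}^π − V_{P, ℓ}^π = (1/(1−γ)) · Σ_{s,a} d_{P'}^π(s,a) · [ −b(s,a) + γ·Σ_{s'} ( P'(s'|s,a) − P(s'|s,a) ) · V_{P,ℓ}^π(s') ], and (ii) V_{P', ℓ−b}^π − V_{P, ℓ}^π = (1/(1−γ)) · Σ_{s,a} d_{P}^π(s,a) · [ −b(s,a) + γ·Σ_{s'} ( P'(s'|s,a) − P(s'|s,a) ) · V_{P',ℓ−b}^π(s') ]. -/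

import Mathlib

open Finset

noncomputable section

/-- Probability that the state at step `τ` equals `s`, when actions are drawn
from policy `π` and transitions from kernel `P`, starting at `s0`. -/
def stateDist {S A : Type*} [Fintype S] [Fintype A] [DecidableEq S]
    (P : S → A → S → ℝ) (π : S → A → ℝ) (s0 : S) : ℕ → S → ℝ
  | 0 => fun s => if s = s0 then 1 else 0
  | τ + 1 => fun s' => ∑ s, ∑ a, stateDist P π s0 τ s * π s a * P s a s'

/-- Discounted value `V_{P,ℓ}^π(s0) = Σ_{τ=0}^∞ γ^τ E[ℓ(s_τ,a_τ) | π, P, s0]`. -/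
def value {S A : Type*} [Fintype S] [Fintype A] [DecidableEq S] (γ : ℝ)
    (P : S → A → S → ℝ) (ℓ : S → A → ℝ) (π : S → A → ℝ) (s0 : S) : ℝ :=
  ∑' τ : ℕ, γ ^ τ * ∑ s, ∑ a, stateDist P π s0 τ s * π s a * ℓ s a

/-- Discounted value from the initial distribution `d₀`:
`V_{P,ℓ}^π = Σ_{s₀} d₀(s₀) V_{P,ℓ}^π(s₀)`. -/
def valueInit {S A : Type*} [Fintype S] [Fintype A] [DecidableEq S] (γ : ℝ)
    (d0 : S → ℝ) (P : S → A → S → ℝ) (ℓ : S → A → ℝ) (π : S → A → ℝ) : ℝ :=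
  ∑ s0, d0 s0 * value γ P ℓ π s0

/-- Step-`h` occupancy: `d_{P,0}^π(s,a) = d₀(s)π(a|s)` and
`d_{P,h+1}^π(s,a) = Σ_{s',a'} d_{P,h}^π(s',a') P(s|s',a') π(a|s)`. -/
def occ {S A : Type*} [Fintype S] [Fintype A] (d0 : S → ℝ)
    (P : S → A → S → ℝ) (π : S → A → ℝ) : ℕ → S → A → ℝ
  | 0 => fun s a => d0 s * π s a
  | h + 1 => fun s a => (∑ s', ∑ a', occ d0 P π h s' a' * P s' a' s) * π s a

/-- Discounted occupancy `d_P^π(s,a) = (1−γ) Σ_{h=0}^∞ γ^h d_{P,h}^π(s,a)`. -/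
def docc {S A : Type*} [Fintype S] [Fintype A] (γ : ℝ) (d0 : S → ℝ)
    (P : S → A → S → ℝ) (π : S → A → ℝ) (s : S) (a : A) : ℝ :=
  (1 - γ) * ∑' h : ℕ, γ ^ h * occ d0 P π h s a

section aux

variable {S A : Type*} [Fintype S] [Fintype A] [DecidableEq S]

/-- expected loss at step τ -/
def eL (P : S → A → S → ℝ) (ℓ : S → A → ℝ) (π : S → A → ℝ) (s0 : S) (τ : ℕ) : ℝ :=
  ∑ s, ∑ a, stateDist P π s0 τ s * π s a * ℓ s a

lemma value_eq_tsum (γ : ℝ) (P : S → A → S → ℝ) (ℓ : S → A → ℝ) (π : S → A → ℝ) (s0 : S) :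
    value γ P ℓ π s0 = ∑' τ : ℕ, γ ^ τ * eL P ℓ π s0 τ := rfl

variable {P : S → A → S → ℝ} {π : S → A → ℝ}

lemma sd_nonneg (hP0 : ∀ s a s', 0 ≤ P s a s') (hπ0 : ∀ s a, 0 ≤ π s a)
    (s0 : S) : ∀ τ s, 0 ≤ stateDist P π s0 τ s := by
  intro τ
  induction τ with
  | zero => intro s; simp only [stateDist]; split_ifs <;> norm_num
  | succ τ ih =>
    intro s
    simp only [stateDist]
    apply Finset.sum_nonneg; intro s' _
    apply Finset.sum_nonneg; intro a _
    have := ih s'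
    have := hπ0 s' a
    have := hP0 s' a s
    positivity

lemma sd_sum (hP1 : ∀ s a, ∑ s', P s a s' = 1) (hπ1 : ∀ s, ∑ a, π s a = 1)
    (s0 : S) : ∀ τ, ∑ s, stateDist P π s0 τ s = 1 := by
  intro τ
  induction τ with
  | zero => simp [stateDist]
  | succ τ ih =>
    simp only [stateDist]
    rw [Finset.sum_comm]
    have : ∀ s ∈ (univ : Finset S), ∑ s' : S, ∑ a, stateDist P π s0 τ s * π s a * P s a s'
        = stateDist P π s0 τ s := by
      intro s _
      rw [Finset.sum_comm]
      calc ∑ a, ∑ s', stateDist P π s0 τ s * π s a * P s a s'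
          = ∑ a, stateDist P π s0 τ s * π s a := by
            apply Finset.sum_congr rfl; intro a _
            rw [← Finset.mul_sum, hP1, mul_one]
        _ = stateDist P π s0 τ s := by rw [← Finset.mul_sum, hπ1, mul_one]
    rw [Finset.sum_congr rfl this, ih]

lemma sd_le_one (hP0 : ∀ s a s', 0 ≤ P s a s') (hP1 : ∀ s a, ∑ s', P s a s' = 1)
    (hπ0 : ∀ s a, 0 ≤ π s a) (hπ1 : ∀ s, ∑ a, π s a = 1)
    (s0 : S) (τ : ℕ) (s : S) : stateDist P π s0 τ s ≤ 1 := by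
  have h := sd_sum hP1 hπ1 s0 τ
  calc stateDist P π s0 τ s ≤ ∑ s', stateDist P π s0 τ s' :=
        Finset.single_le_sum (fun s' _ => sd_nonneg hP0 hπ0 s0 τ s') (mem_univ s)
    _ = 1 := h

lemma sd_succ (s0 : S) : ∀ τ s, stateDist P π s0 (τ + 1) s
    = ∑ s1, (∑ a, π s0 a * P s0 a s1) * stateDist P π s1 τ s := by
  intro τ
  induction τ with
  | zero =>
    intro s
    simp only [stateDist]
    rw [Finset.sum_comm]
    simp [ite_mul, mul_ite, mul_one, mul_zero, one_mul, zero_mul,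
      Finset.sum_ite_eq, Finset.sum_ite_eq', Finset.sum_mul]
  | succ τ ih =>
    intro s
    show (∑ s', ∑ a, stateDist P π s0 (τ+1) s' * π s' a * P s' a s) = _
    calc ∑ s', ∑ a, stateDist P π s0 (τ+1) s' * π s' a * P s' a s
        = ∑ s', ∑ a, ∑ s1, (∑ a', π s0 a' * P s0 a' s1) * stateDist P π s1 τ s' * π s' a * P s' a s := by
          apply Finset.sum_congr rfl; intro s' _
          apply Finset.sum_congr rfl; intro a _
          rw [ih, Finset.sum_mul, Finset.sum_mul]
      _ = ∑ s1, ∑ s', ∑ a, (∑ a', π s0 a' * P s0 a' s1) * stateDist P π s1 τ s' * π s' a * P s' a s := by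
          rw [show (∑ s', ∑ a, ∑ s1, (∑ a', π s0 a' * P s0 a' s1) * stateDist P π s1 τ s' * π s' a * P s' a s)
              = ∑ s', ∑ s1, ∑ a, (∑ a', π s0 a' * P s0 a' s1) * stateDist P π s1 τ s' * π s' a * P s' a s
            from Finset.sum_congr rfl fun s' _ => Finset.sum_comm]
          exact Finset.sum_comm
      _ = ∑ s1, (∑ a', π s0 a' * P s0 a' s1) * ∑ s', ∑ a, stateDist P π s1 τ s' * π s' a * P s' a s := by
          apply Finset.sum_congr rfl; intro s1 _
          rw [Finset.mul_sum]
          apply Finset.sum_congr rfl; intro s' _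
          rw [Finset.mul_sum]
          apply Finset.sum_congr rfl; intro a _
          ring
      _ = ∑ s1, (∑ a', π s0 a' * P s0 a' s1) * stateDist P π s1 (τ+1) s := rfl

lemma eL_zero (P : S → A → S → ℝ) (ℓ : S → A → ℝ) (π : S → A → ℝ) (s0 : S) :
    eL P ℓ π s0 0 = ∑ a, π s0 a * ℓ s0 a := by
  simp only [eL, stateDist]
  rw [Finset.sum_comm]
  simp [ite_mul, one_mul, zero_mul, Finset.sum_ite_eq', mul_assoc]

lemma eL_succ (ℓ : S → A → ℝ) (s0 : S) (τ : ℕ) :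
    eL P ℓ π s0 (τ + 1) = ∑ s1, (∑ a, π s0 a * P s0 a s1) * eL P ℓ π s1 τ := by
  simp only [eL]
  calc ∑ s, ∑ a, stateDist P π s0 (τ+1) s * π s a * ℓ s a
      = ∑ s, ∑ a, ∑ s1, (∑ a', π s0 a' * P s0 a' s1) * stateDist P π s1 τ s * π s a * ℓ s a := by
        apply Finset.sum_congr rfl; intro s _
        apply Finset.sum_congr rfl; intro a _
        rw [sd_succ, Finset.sum_mul, Finset.sum_mul]
    _ = ∑ s1, ∑ s, ∑ a, (∑ a', π s0 a' * P s0 a' s1) * stateDist P π s1 τ s * π s a * ℓ s a := by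
        rw [show (∑ s, ∑ a, ∑ s1, (∑ a', π s0 a' * P s0 a' s1) * stateDist P π s1 τ s * π s a * ℓ s a)
            = ∑ s, ∑ s1, ∑ a, (∑ a', π s0 a' * P s0 a' s1) * stateDist P π s1 τ s * π s a * ℓ s a
          from Finset.sum_congr rfl fun s _ => Finset.sum_comm]
        exact Finset.sum_comm
    _ = ∑ s1, (∑ a', π s0 a' * P s0 a' s1) * ∑ s, ∑ a, stateDist P π s1 τ s * π s a * ℓ s a := by
        apply Finset.sum_congr rfl; intro s1 _
        rw [Finset.mul_sum]
        apply Finset.sum_congr rfl; intro s _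
        rw [Finset.mul_sum]
        apply Finset.sum_congr rfl; intro a _
        ring

lemma pi_le_one (hπ0 : ∀ s a, 0 ≤ π s a) (hπ1 : ∀ s, ∑ a, π s a = 1) (s : S) (a : A) :
    π s a ≤ 1 := by
  calc π s a ≤ ∑ a', π s a' := Finset.single_le_sum (fun a' _ => hπ0 s a') (mem_univ a)
    _ = 1 := hπ1 s

lemma eL_abs_le (hP0 : ∀ s a s', 0 ≤ P s a s') (hP1 : ∀ s a, ∑ s', P s a s' = 1)
    (hπ0 : ∀ s a, 0 ≤ π s a) (hπ1 : ∀ s, ∑ a, π s a = 1)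
    (ℓ : S → A → ℝ) (s0 : S) (τ : ℕ) :
    |eL P ℓ π s0 τ| ≤ ∑ s, ∑ a, |ℓ s a| := by
  calc |eL P ℓ π s0 τ| ≤ ∑ s, |∑ a, stateDist P π s0 τ s * π s a * ℓ s a| :=
        Finset.abs_sum_le_sum_abs _ _
    _ ≤ ∑ s, ∑ a, |stateDist P π s0 τ s * π s a * ℓ s a| :=
        Finset.sum_le_sum fun s _ => Finset.abs_sum_le_sum_abs _ _
    _ ≤ ∑ s, ∑ a, |ℓ s a| := by
        apply Finset.sum_le_sum; intro s _
        apply Finset.sum_le_sum; intro a _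
        rw [abs_mul, abs_mul]
        have h1 : |stateDist P π s0 τ s| ≤ 1 := by
          rw [abs_of_nonneg (sd_nonneg hP0 hπ0 s0 τ s)]
          exact sd_le_one hP0 hP1 hπ0 hπ1 s0 τ s
        have h2 : |π s a| ≤ 1 := by
          rw [abs_of_nonneg (hπ0 s a)]; exact pi_le_one hπ0 hπ1 s a
        calc |stateDist P π s0 τ s| * |π s a| * |ℓ s a| ≤ 1 * 1 * |ℓ s a| := by
              apply mul_le_mul _ le_rfl (abs_nonneg _) (by norm_num)
              exact mul_le_mul h1 h2 (abs_nonneg _) (by norm_num)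
          _ = |ℓ s a| := by ring

lemma summable_geL {γ : ℝ} (hγ : γ ∈ Set.Ico (0:ℝ) 1)
    (hP0 : ∀ s a s', 0 ≤ P s a s') (hP1 : ∀ s a, ∑ s', P s a s' = 1)
    (hπ0 : ∀ s a, 0 ≤ π s a) (hπ1 : ∀ s, ∑ a, π s a = 1)
    (ℓ : S → A → ℝ) (s0 : S) :
    Summable (fun τ => γ ^ τ * eL P ℓ π s0 τ) := by
  apply Summable.of_norm_bounded (g := fun τ => (∑ s, ∑ a, |ℓ s a|) * γ ^ τ)
    ((summable_geometric_of_lt_one hγ.1 hγ.2).mul_left _)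
  intro τ
  rw [Real.norm_eq_abs, abs_mul, abs_pow, abs_of_nonneg hγ.1, mul_comm]
  exact mul_le_mul_of_nonneg_right (eL_abs_le hP0 hP1 hπ0 hπ1 ℓ s0 τ) (pow_nonneg hγ.1 τ)

lemma eL_sub (ℓ1 ℓ2 : S → A → ℝ) (s0 : S) (τ : ℕ) :
    eL P (fun s a => ℓ1 s a - ℓ2 s a) π s0 τ = eL P ℓ1 π s0 τ - eL P ℓ2 π s0 τ := by
  simp only [eL, mul_sub, Finset.sum_sub_distrib]

lemma value_sub {γ : ℝ} (hγ : γ ∈ Set.Ico (0:ℝ) 1)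
    (hP0 : ∀ s a s', 0 ≤ P s a s') (hP1 : ∀ s a, ∑ s', P s a s' = 1)
    (hπ0 : ∀ s a, 0 ≤ π s a) (hπ1 : ∀ s, ∑ a, π s a = 1)
    (ℓ1 ℓ2 : S → A → ℝ) (s0 : S) :
    value γ P (fun s a => ℓ1 s a - ℓ2 s a) π s0 = value γ P ℓ1 π s0 - value γ P ℓ2 π s0 := by
  simp only [value_eq_tsum]
  rw [← Summable.tsum_sub (summable_geL hγ hP0 hP1 hπ0 hπ1 ℓ1 s0) (summable_geL hγ hP0 hP1 hπ0 hπ1 ℓ2 s0)]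
  apply tsum_congr; intro τ
  rw [eL_sub]; ring

lemma bellman {γ : ℝ} (hγ : γ ∈ Set.Ico (0:ℝ) 1)
    (hP0 : ∀ s a s', 0 ≤ P s a s') (hP1 : ∀ s a, ∑ s', P s a s' = 1)
    (hπ0 : ∀ s a, 0 ≤ π s a) (hπ1 : ∀ s, ∑ a, π s a = 1)
    (ℓ : S → A → ℝ) (s0 : S) :
    value γ P ℓ π s0 = (∑ a, π s0 a * ℓ s0 a)
      + γ * ∑ s1, (∑ a, π s0 a * P s0 a s1) * value γ P ℓ π s1 := by
  rw [value_eq_tsum, Summable.tsum_eq_zero_add (summable_geL hγ hP0 hP1 hπ0 hπ1 ℓ s0)]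
  rw [pow_zero, one_mul, eL_zero]
  congr 1
  calc ∑' τ : ℕ, γ ^ (τ + 1) * eL P ℓ π s0 (τ + 1)
      = ∑' τ : ℕ, γ * ∑ s1, (∑ a, π s0 a * P s0 a s1) * (γ ^ τ * eL P ℓ π s1 τ) := by
        apply tsum_congr; intro τ
        rw [eL_succ, pow_succ, Finset.mul_sum, Finset.mul_sum]
        apply Finset.sum_congr rfl; intro s1 _
        ring
    _ = γ * ∑' τ : ℕ, ∑ s1, (∑ a, π s0 a * P s0 a s1) * (γ ^ τ * eL P ℓ π s1 τ) :=
        tsum_mul_left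
    _ = γ * ∑ s1, ∑' τ : ℕ, (∑ a, π s0 a * P s0 a s1) * (γ ^ τ * eL P ℓ π s1 τ) := by
        rw [Summable.tsum_finsetSum]
        intro s1 _
        exact (summable_geL hγ hP0 hP1 hπ0 hπ1 ℓ s1).mul_left _
    _ = γ * ∑ s1, (∑ a, π s0 a * P s0 a s1) * value γ P ℓ π s1 := by
        congr 1
        apply Finset.sum_congr rfl; intro s1 _
        rw [tsum_mul_left, value_eq_tsum]

lemma bellman_unique {γ : ℝ} (hγ : γ ∈ Set.Ico (0:ℝ) 1)
    (K : S → S → ℝ) (hK0 : ∀ s s', 0 ≤ K s s') (hK1 : ∀ s, ∑ s', K s s' = 1)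
    (c V W : S → ℝ)
    (hV : ∀ s, V s = c s + γ * ∑ s1, K s s1 * V s1)
    (hW : ∀ s, W s = c s + γ * ∑ s1, K s s1 * W s1) :
    ∀ s, V s = W s := by
  have hD : ∀ s, V s - W s = γ * ∑ s1, K s s1 * (V s1 - W s1) := by
    intro s
    rw [hV s, hW s]
    simp only [mul_sub, Finset.sum_sub_distrib]
    ring
  cases isEmpty_or_nonempty S with
  | inl h => intro s; exact (h.false s).elim
  | inr h =>
    have hne : (univ : Finset S).Nonempty := univ_nonempty
    set M := (univ : Finset S).sup' hne (fun s => |V s - W s|) with hM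
    obtain ⟨t, _, ht⟩ := Finset.exists_mem_eq_sup' hne (fun s => |V s - W s|)
    have hMle : ∀ s, |V s - W s| ≤ M := fun s => by rw [hM]; exact Finset.le_sup' (fun s => |V s - W s|) (mem_univ s)
    have hM0 : 0 ≤ M := le_trans (abs_nonneg _) (hMle t)
    have key : |V t - W t| ≤ γ * M := by
      rw [hD t, abs_mul, abs_of_nonneg hγ.1]
      apply mul_le_mul_of_nonneg_left _ hγ.1
      calc |∑ s1, K t s1 * (V s1 - W s1)| ≤ ∑ s1, |K t s1 * (V s1 - W s1)| :=
            Finset.abs_sum_le_sum_abs _ _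
        _ ≤ ∑ s1, K t s1 * M := by
            apply Finset.sum_le_sum; intro s1 _
            rw [abs_mul, abs_of_nonneg (hK0 t s1)]
            exact mul_le_mul_of_nonneg_left (hMle s1) (hK0 t s1)
        _ = M := by rw [← Finset.sum_mul, hK1, one_mul]
    have hMt : M = |V t - W t| := by rw [hM]; exact ht
    have hcontr : M ≤ γ * M := le_trans hMt.le key
    have hMz : M ≤ 0 := by nlinarith [hγ.2]
    intro s
    have := hMle s
    have : |V s - W s| ≤ 0 := le_trans this hMz
    have := abs_nonneg (V s - W s)
    have : |V s - W s| = 0 := le_antisymm ‹|V s - W s| ≤ 0› ‹0 ≤ |V s - W s|›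
    linarith [abs_eq_zero.mp this, sub_eq_zero.mp (abs_eq_zero.mp this)]

lemma value_shift {γ : ℝ} (hγ : γ ∈ Set.Ico (0:ℝ) 1)
    (Q R : S → A → S → ℝ)
    (hQ0 : ∀ s a s', 0 ≤ Q s a s') (hQ1 : ∀ s a, ∑ s', Q s a s' = 1)
    (hR0 : ∀ s a s', 0 ≤ R s a s') (hR1 : ∀ s a, ∑ s', R s a s' = 1)
    (hπ0 : ∀ s a, 0 ≤ π s a) (hπ1 : ∀ s, ∑ a, π s a = 1)
    (m : S → A → ℝ) :
    ∀ s0, value γ R (fun s a => m s a - γ * ∑ s', (R s a s' - Q s a s') * value γ Q m π s') π s0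
      = value γ Q m π s0 := by
  have key := bellman_unique (V := value γ R
      (fun s a => m s a - γ * ∑ s', (R s a s' - Q s a s') * value γ Q m π s') π)
    (W := value γ Q m π) hγ (fun s s1 => ∑ a, π s a * R s a s1)
    (fun s s' => Finset.sum_nonneg fun a _ => mul_nonneg (hπ0 s a) (hR0 s a s'))
    (fun s => by
      rw [Finset.sum_comm]
      calc ∑ a, ∑ s', π s a * R s a s' = ∑ a, π s a := by
            apply Finset.sum_congr rfl; intro a _; rw [← Finset.mul_sum, hR1, mul_one]
        _ = 1 := hπ1 s)
    (fun s => ∑ a, π s a * (m s a - γ * ∑ s', (R s a s' - Q s a s') * value γ Q m π s'))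
    (fun s => bellman hγ hR0 hR1 hπ0 hπ1 _ s)
    ?_
  · exact key
  · intro s
    have hB := bellman hγ hQ0 hQ1 hπ0 hπ1 m s
    rw [hB]
    have h1 : ∑ a, π s a * (γ * ∑ s', (R s a s' - Q s a s') * value γ Q m π s')
        = γ * (∑ s1, (∑ a, π s a * R s a s1) * value γ Q m π s1
             - ∑ s1, (∑ a, π s a * Q s a s1) * value γ Q m π s1) := by
      calc ∑ a, π s a * (γ * ∑ s', (R s a s' - Q s a s') * value γ Q m π s')
          = ∑ a, ∑ s', γ * (π s a * R s a s' * value γ Q m π s'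
              - π s a * Q s a s' * value γ Q m π s') := by
            apply Finset.sum_congr rfl; intro a _
            rw [Finset.mul_sum, Finset.mul_sum]
            apply Finset.sum_congr rfl; intro s' _
            ring
        _ = ∑ s', ∑ a, γ * (π s a * R s a s' * value γ Q m π s'
              - π s a * Q s a s' * value γ Q m π s') := Finset.sum_comm
        _ = γ * (∑ s1, (∑ a, π s a * R s a s1) * value γ Q m π s1
             - ∑ s1, (∑ a, π s a * Q s a s1) * value γ Q m π s1) := by
            rw [← Finset.sum_sub_distrib, Finset.mul_sum]
            apply Finset.sum_congr rfl; intro s' _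
            rw [Finset.sum_mul, Finset.sum_mul, ← Finset.sum_sub_distrib, Finset.mul_sum]
    have h2 : ∑ a, π s a * (m s a - γ * ∑ s', (R s a s' - Q s a s') * value γ Q m π s')
        = ∑ a, π s a * m s a
          - ∑ a, π s a * (γ * ∑ s', (R s a s' - Q s a s') * value γ Q m π s') := by
      rw [← Finset.sum_sub_distrib]
      apply Finset.sum_congr rfl; intro a _
      ring
    beta_reduce
    rw [h2, h1]
    ring

lemma occ_eq (d0 : S → ℝ) : ∀ (h : ℕ) (s : S) (a : A),
    occ d0 P π h s a = (∑ s0, d0 s0 * stateDist P π s0 h s) * π s a := by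
  intro h
  induction h with
  | zero =>
    intro s a
    simp [occ, stateDist, mul_ite, mul_one, mul_zero, Finset.sum_ite_eq]
  | succ h ih =>
    intro s a
    show (∑ s', ∑ a', occ d0 P π h s' a' * P s' a' s) * π s a = _
    congr 1
    calc ∑ s', ∑ a', occ d0 P π h s' a' * P s' a' s
        = ∑ s', ∑ a', ∑ s0, d0 s0 * (stateDist P π s0 h s' * π s' a' * P s' a' s) := by
          apply Finset.sum_congr rfl; intro s' _
          apply Finset.sum_congr rfl; intro a' _
          rw [ih, Finset.sum_mul, Finset.sum_mul]
          apply Finset.sum_congr rfl; intro s0 _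
          ring
      _ = ∑ s0, ∑ s', ∑ a', d0 s0 * (stateDist P π s0 h s' * π s' a' * P s' a' s) := by
          rw [show (∑ s', ∑ a', ∑ s0, d0 s0 * (stateDist P π s0 h s' * π s' a' * P s' a' s))
              = ∑ s', ∑ s0, ∑ a', d0 s0 * (stateDist P π s0 h s' * π s' a' * P s' a' s)
            from Finset.sum_congr rfl fun s' _ => Finset.sum_comm]
          exact Finset.sum_comm
      _ = ∑ s0, d0 s0 * stateDist P π s0 (h+1) s := by
          apply Finset.sum_congr rfl; intro s0 _
          show _ = d0 s0 * ∑ s', ∑ a', stateDist P π s0 h s' * π s' a' * P s' a' s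
          rw [Finset.mul_sum]
          apply Finset.sum_congr rfl; intro s' _
          rw [Finset.mul_sum]

lemma occ_nonneg (hP0 : ∀ s a s', 0 ≤ P s a s') (hπ0 : ∀ s a, 0 ≤ π s a)
    {d0 : S → ℝ} (hd00 : ∀ s, 0 ≤ d0 s) (h : ℕ) (s : S) (a : A) :
    0 ≤ occ d0 P π h s a := by
  rw [occ_eq]
  apply mul_nonneg _ (hπ0 s a)
  exact Finset.sum_nonneg fun s0 _ => mul_nonneg (hd00 s0) (sd_nonneg hP0 hπ0 s0 h s)

lemma occ_le_one (hP0 : ∀ s a s', 0 ≤ P s a s') (hP1 : ∀ s a, ∑ s', P s a s' = 1)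
    (hπ0 : ∀ s a, 0 ≤ π s a) (hπ1 : ∀ s, ∑ a, π s a = 1)
    {d0 : S → ℝ} (hd00 : ∀ s, 0 ≤ d0 s) (hd01 : ∑ s, d0 s = 1) (h : ℕ) (s : S) (a : A) :
    occ d0 P π h s a ≤ 1 := by
  rw [occ_eq]
  have h1 : ∑ s0, d0 s0 * stateDist P π s0 h s ≤ 1 := by
    calc ∑ s0, d0 s0 * stateDist P π s0 h s ≤ ∑ s0, d0 s0 := by
          apply Finset.sum_le_sum; intro s0 _
          calc d0 s0 * stateDist P π s0 h s ≤ d0 s0 * 1 :=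
                mul_le_mul_of_nonneg_left (sd_le_one hP0 hP1 hπ0 hπ1 s0 h s) (hd00 s0)
            _ = d0 s0 := mul_one _
      _ = 1 := hd01
  have h0 : 0 ≤ ∑ s0, d0 s0 * stateDist P π s0 h s :=
    Finset.sum_nonneg fun s0 _ => mul_nonneg (hd00 s0) (sd_nonneg hP0 hπ0 s0 h s)
  calc (∑ s0, d0 s0 * stateDist P π s0 h s) * π s a ≤ 1 * 1 :=
        mul_le_mul h1 (pi_le_one hπ0 hπ1 s a) (hπ0 s a) (by norm_num)
    _ = 1 := by norm_num

lemma summable_occ {γ : ℝ} (hγ : γ ∈ Set.Ico (0:ℝ) 1)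
    (hP0 : ∀ s a s', 0 ≤ P s a s') (hP1 : ∀ s a, ∑ s', P s a s' = 1)
    (hπ0 : ∀ s a, 0 ≤ π s a) (hπ1 : ∀ s, ∑ a, π s a = 1)
    {d0 : S → ℝ} (hd00 : ∀ s, 0 ≤ d0 s) (hd01 : ∑ s, d0 s = 1) (s : S) (a : A) :
    Summable (fun h : ℕ => γ ^ h * occ d0 P π h s a) := by
  apply Summable.of_norm_bounded (g := fun h => γ ^ h) (summable_geometric_of_lt_one hγ.1 hγ.2)
  intro h
  rw [Real.norm_eq_abs, abs_mul, abs_pow, abs_of_nonneg hγ.1,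
    abs_of_nonneg (occ_nonneg hP0 hπ0 hd00 h s a)]
  calc γ ^ h * occ d0 P π h s a ≤ γ ^ h * 1 :=
        mul_le_mul_of_nonneg_left (occ_le_one hP0 hP1 hπ0 hπ1 hd00 hd01 h s a) (pow_nonneg hγ.1 h)
    _ = γ ^ h := mul_one _

lemma docc_apply {γ : ℝ} (hγ : γ ∈ Set.Ico (0:ℝ) 1)
    (hP0 : ∀ s a s', 0 ≤ P s a s') (hP1 : ∀ s a, ∑ s', P s a s' = 1)
    (hπ0 : ∀ s a, 0 ≤ π s a) (hπ1 : ∀ s, ∑ a, π s a = 1)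
    {d0 : S → ℝ} (hd00 : ∀ s, 0 ≤ d0 s) (hd01 : ∑ s, d0 s = 1)
    (g : S → A → ℝ) :
    ∑ s, ∑ a, docc γ d0 P π s a * g s a
      = (1 - γ) * ∑ s0, d0 s0 * value γ P g π s0 := by
  have hs : ∀ (s : S) (a : A), Summable (fun h : ℕ => γ ^ h * occ d0 P π h s a * g s a) :=
    fun s a => (summable_occ hγ hP0 hP1 hπ0 hπ1 hd00 hd01 s a).mul_right _
  calc ∑ s, ∑ a, docc γ d0 P π s a * g s a
      = (1 - γ) * ∑ s, ∑ a, ∑' h : ℕ, γ ^ h * occ d0 P π h s a * g s a := by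
        rw [Finset.mul_sum]
        apply Finset.sum_congr rfl; intro s _
        rw [Finset.mul_sum]
        apply Finset.sum_congr rfl; intro a _
        rw [docc, mul_assoc, ← tsum_mul_right]
    _ = (1 - γ) * ∑' h : ℕ, ∑ s, ∑ a, γ ^ h * occ d0 P π h s a * g s a := by
        congr 1
        rw [Summable.tsum_finsetSum (fun s _ => summable_sum (fun a _ => hs s a))]
        apply Finset.sum_congr rfl; intro s _
        rw [Summable.tsum_finsetSum (fun a _ => hs s a)]
    _ = (1 - γ) * ∑' h : ℕ, ∑ s0, d0 s0 * (γ ^ h * eL P g π s0 h) := by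
        congr 1
        apply tsum_congr; intro h
        calc ∑ s, ∑ a, γ ^ h * occ d0 P π h s a * g s a
            = ∑ s, ∑ a, ∑ s0, d0 s0 * (γ ^ h * (stateDist P π s0 h s * π s a * g s a)) := by
              apply Finset.sum_congr rfl; intro s _
              apply Finset.sum_congr rfl; intro a _
              rw [occ_eq]
              rw [show γ ^ h * ((∑ s0, d0 s0 * stateDist P π s0 h s) * π s a) * g s a
                  = (∑ s0, d0 s0 * stateDist P π s0 h s) * (γ ^ h * π s a * g s a) from by ring]
              rw [Finset.sum_mul]
              apply Finset.sum_congr rfl; intro s0 _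
              ring
          _ = ∑ s0, ∑ s, ∑ a, d0 s0 * (γ ^ h * (stateDist P π s0 h s * π s a * g s a)) := by
              rw [show (∑ s, ∑ a, ∑ s0, d0 s0 * (γ ^ h * (stateDist P π s0 h s * π s a * g s a)))
                  = ∑ s, ∑ s0, ∑ a, d0 s0 * (γ ^ h * (stateDist P π s0 h s * π s a * g s a))
                from Finset.sum_congr rfl fun s _ => Finset.sum_comm]
              exact Finset.sum_comm
          _ = ∑ s0, d0 s0 * (γ ^ h * eL P g π s0 h) := by
              apply Finset.sum_congr rfl; intro s0 _
              rw [eL, Finset.mul_sum, Finset.mul_sum]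
              apply Finset.sum_congr rfl; intro s _
              rw [Finset.mul_sum, Finset.mul_sum]
    _ = (1 - γ) * ∑ s0, d0 s0 * value γ P g π s0 := by
        congr 1
        rw [Summable.tsum_finsetSum (fun s0 _ => ((summable_geL hγ hP0 hP1 hπ0 hπ1 g s0).mul_left (d0 s0)))]
        apply Finset.sum_congr rfl; intro s0 _
        rw [tsum_mul_left, value_eq_tsum]

end aux

/-- Simulation lemma (Lemma C.4 of the paper): for two transition kernels
`P`, `P'`, bounded functions `ℓ`, `b`, and any policy `π`,
(i) `V_{P',ℓ−b}^π − V_{P,ℓ}^π = (1/(1−γ)) Σ_{s,a} d_{P'}^π(s,a)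
      (−b(s,a) + γ Σ_{s'} (P'(s'|s,a) − P(s'|s,a)) V_{P,ℓ}^π(s'))`, and
(ii) the same with occupancy `d_P^π` and value `V_{P',ℓ−b}^π` inside. -/
theorem stmt_4 {S A : Type*} [Fintype S] [Fintype A] [DecidableEq S]
    (γ : ℝ) (hγ : γ ∈ Set.Ico (0 : ℝ) 1)
    (d0 : S → ℝ) (hd00 : ∀ s, 0 ≤ d0 s) (hd01 : ∑ s, d0 s = 1)
    (P P' : S → A → S → ℝ)
    (hP0 : ∀ s a s', 0 ≤ P s a s') (hP1 : ∀ s a, ∑ s', P s a s' = 1)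
    (hP'0 : ∀ s a s', 0 ≤ P' s a s') (hP'1 : ∀ s a, ∑ s', P' s a s' = 1)
    (ℓ b : S → A → ℝ)
    (π : S → A → ℝ) (hπ0 : ∀ s a, 0 ≤ π s a) (hπ1 : ∀ s, ∑ a, π s a = 1) :
    (valueInit γ d0 P' (fun s a => ℓ s a - b s a) π - valueInit γ d0 P ℓ π =
      (1 / (1 - γ)) * ∑ s, ∑ a, docc γ d0 P' π s a *
        (-(b s a) + γ * ∑ s', (P' s a s' - P s a s') * value γ P ℓ π s')) ∧
    (valueInit γ d0 P' (fun s a => ℓ s a - b s a) π - valueInit γ d0 P ℓ π =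
      (1 / (1 - γ)) * ∑ s, ∑ a, docc γ d0 P π s a *
        (-(b s a) + γ * ∑ s', (P' s a s' - P s a s') *
          value γ P' (fun t c => ℓ t c - b t c) π s')) := by
  have hne : (1 : ℝ) - γ ≠ 0 := by have := hγ.2; intro h; linarith
  constructor
  · have hda := docc_apply (P := P') hγ hP'0 hP'1 hπ0 hπ1 hd00 hd01
      (fun s a => -(b s a) + γ * ∑ s', (P' s a s' - P s a s') * value γ P ℓ π s')
    beta_reduce at hda
    rw [hda]
    have hg : ∀ s0 : S, value γ P'
        (fun s a => -(b s a) + γ * ∑ s', (P' s a s' - P s a s') * value γ P ℓ π s') π s0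
        = value γ P' (fun s a => ℓ s a - b s a) π s0 - value γ P ℓ π s0 := by
      intro s0
      have h1 : (fun (s : S) (a : A) =>
            -(b s a) + γ * ∑ s', (P' s a s' - P s a s') * value γ P ℓ π s')
          = fun s a => (ℓ s a - b s a)
              - (ℓ s a - γ * ∑ s', (P' s a s' - P s a s') * value γ P ℓ π s') := by
        funext s a; ring
      have h2 := value_sub (P := P') hγ hP'0 hP'1 hπ0 hπ1
        (fun s a => ℓ s a - b s a)
        (fun s a => ℓ s a - γ * ∑ s', (P' s a s' - P s a s') * value γ P ℓ π s') s0
      beta_reduce at h2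
      rw [h1, h2, value_shift hγ P P' hP0 hP1 hP'0 hP'1 hπ0 hπ1 ℓ s0]
    have hsum : ∑ s0, d0 s0 * value γ P'
        (fun s a => -(b s a) + γ * ∑ s', (P' s a s' - P s a s') * value γ P ℓ π s') π s0
        = valueInit γ d0 P' (fun s a => ℓ s a - b s a) π - valueInit γ d0 P ℓ π := by
      rw [valueInit, valueInit, ← Finset.sum_sub_distrib]
      apply Finset.sum_congr rfl; intro s0 _
      rw [hg s0]; ring
    rw [hsum]
    field_simp
  · have hda := docc_apply (P := P) hγ hP0 hP1 hπ0 hπ1 hd00 hd01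
      (fun s a => -(b s a) + γ * ∑ s', (P' s a s' - P s a s') *
        value γ P' (fun t c => ℓ t c - b t c) π s')
    beta_reduce at hda
    rw [hda]
    have hg : ∀ s0 : S, value γ P
        (fun s a => -(b s a) + γ * ∑ s', (P' s a s' - P s a s') *
          value γ P' (fun t c => ℓ t c - b t c) π s') π s0
        = value γ P' (fun t c => ℓ t c - b t c) π s0 - value γ P ℓ π s0 := by
      intro s0
      have h1 : (fun (s : S) (a : A) => -(b s a) + γ * ∑ s', (P' s a s' - P s a s') *
            value γ P' (fun t c => ℓ t c - b t c) π s')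
          = fun s a => ((ℓ s a - b s a) - γ * ∑ s', (P s a s' - P' s a s') *
              value γ P' (fun t c => ℓ t c - b t c) π s') - ℓ s a := by
        funext s a
        rw [show (∑ s', (P' s a s' - P s a s') * value γ P' (fun t c => ℓ t c - b t c) π s')
            = - ∑ s', (P s a s' - P' s a s') * value γ P' (fun t c => ℓ t c - b t c) π s' from by
          rw [← Finset.sum_neg_distrib]
          apply Finset.sum_congr rfl; intro s' _; ring]
        ring
      have h2 := value_sub (P := P) hγ hP0 hP1 hπ0 hπ1
        (fun s a => (ℓ s a - b s a) - γ * ∑ s', (P s a s' - P' s a s') *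
          value γ P' (fun t c => ℓ t c - b t c) π s') ℓ s0
      beta_reduce at h2
      have h3 := value_shift hγ P' P hP'0 hP'1 hP0 hP1 hπ0 hπ1 (fun t c => ℓ t c - b t c) s0
      beta_reduce at h3
      rw [h1, h2, h3]
    have hsum : ∑ s0, d0 s0 * value γ P
        (fun s a => -(b s a) + γ * ∑ s', (P' s a s' - P s a s') *
          value γ P' (fun t c => ℓ t c - b t c) π s') π s0
        = valueInit γ d0 P' (fun s a => ℓ s a - b s a) π - valueInit γ d0 P ℓ π := by
      rw [valueInit, valueInit, ← Finset.sum_sub_distrib]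
      apply Finset.sum_congr rfl; intro s0 _
      rw [hg s0]; ring
    rw [hsum]
    field_simp
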